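/- For every ε ∈ (0, 1/2), the cardinal 𝔢_ubd^{fr} satisfies 𝔢_ubd^{fr} ≤ 𝔰_{1/2±ε}; hence 𝔢_ubd^{fr} ≤ inf over ε of the ε-almost bisecting numbers. -/

import Mathlib

open Filter Cardinal

/-- `𝔢^{fr}_ubd`: the least cardinality of a bounded family `F ⊆ ω^ω` such
that every `g ∈ ω^ω` is everywhere different from some member of `F`. -/
noncomputable def eFr : Cardinal :=
  sInf {c : Cardinal | ∃ F : Set (ℕ → ℕ),
    (∃ h : ℕ → ℕ, ∀ f ∈ F, ∀ n, f n ≤ h n) ∧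
    (∀ g : ℕ → ℕ, ∃ f ∈ F, ∀ n, f n ≠ g n) ∧ #F = c}

/-- `S` ε-almost bisects `X`: for all but finitely many `n`, the relative
density of `S` in `X ∩ n` lies in `(1/2 - ε, 1/2 + ε)`. -/
def AlmostBisects (ε : ℝ) (S X : Set ℕ) : Prop :=
  {n : ℕ | ((S ∩ X ∩ Set.Iio n).ncard : ℝ) / ((X ∩ Set.Iio n).ncard) ∉
      Set.Ioo (1 / 2 - ε) (1 / 2 + ε)}.Finite

/-- The ε-almost bisecting number `𝔰_{1/2±ε}`. -/
noncomputable def sEps (ε : ℝ) : Cardinal :=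
  sInf {c : Cardinal | ∃ F : Set (Set ℕ), (∀ S ∈ F, S.Infinite) ∧
    (∀ X : Set ℕ, X.Infinite → ∃ S ∈ F, AlmostBisects ε S X) ∧ #F = c}

/-!
Choose `K` with `1/2 + ε ≤ K (1/2 - ε)` and cut `ℕ` into consecutive blocks `I_m` of size
`2 (K+1)^m`. Let `X` pick a `(K+1)^m`-element pattern `P_m ⊆ I_m` from every block. Since
`|P_m| ≥ K · ∑_{j<m} |P_j|`, at the end of `I_m` the density of `S` in `X` leaves
`(1/2 - ε, 1/2 + ε)` whenever `P_m ⊆ S` or `P_m ∩ S = ∅`; so if `S` ε-almost bisects `X`,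
this happens for only finitely many `m`. By pigeonhole every `S` has such a pattern `v_S(m)` on
every block. Hence for an ε-almost bisecting family `𝒮`, every choice `g` of patterns agrees
with some `v_S` only finitely often. Coding patterns by numbers and correcting `v_S` at those
finitely many places gives a bounded family of size `|𝒮| · ℵ₀ = |𝒮|` that is everywhere
different from every `g`. The family `𝒮` is uncountable, since a diagonal choice meets
countably many `v_S` infinitely often.
-/

lemma Set.ncard_inter_Iio_eq_count (A : Set ℕ) [DecidablePred (· ∈ A)] (n : ℕ) :
    (A ∩ Set.Iio n).ncard = Nat.count (· ∈ A) n := by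
  rw [Nat.count_eq_card_filter_range, ← Set.ncard_coe_finset]
  congr 1
  ext x
  simp [and_comm]

lemma Nat.count_mem_and_even_count (X : Set ℕ) [DecidablePred (· ∈ X)] (n : ℕ) :
    Nat.count (fun x => x ∈ X ∧ Even (Nat.count (· ∈ X) x)) n =
      (Nat.count (· ∈ X) n + 1) / 2 := by
  induction n with
  | zero => simp
  | succ n ih =>
    rw [Nat.count_succ, Nat.count_succ, ih]
    by_cases hn : n ∈ X
    · rcases Nat.even_or_odd (Nat.count (· ∈ X) n) with h | h
      · simp only [hn, h, and_self, if_true]; rcases h with ⟨k, hk⟩; omega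
      · simp only [hn, Nat.not_even_iff_odd.2 h, and_false, if_true, if_false]
        rcases h with ⟨k, hk⟩; omega
    · simp [hn]

lemma half_succ_div_mem_Ioo {ε : ℝ} {c : ℕ} (hc : 1 < 2 * ε * c) :
    (((c + 1) / 2 : ℕ) : ℝ) / c ∈ Set.Ioo (1 / 2 - ε) (1 / 2 + ε) := by
  have hc0 : (0 : ℝ) < c := by
    rcases Nat.eq_zero_or_pos c with h | h
    · simp [h] at hc; linarith
    · exact_mod_cast h
  have hlo : (c : ℝ) ≤ 2 * ((c + 1) / 2 : ℕ) := by
    exact_mod_cast (by omega : c ≤ 2 * ((c + 1) / 2))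
  have hhi : 2 * (((c + 1) / 2 : ℕ) : ℝ) ≤ c + 1 := by
    exact_mod_cast (by omega : 2 * ((c + 1) / 2) ≤ c + 1)
  constructor
  · rw [lt_div_iff₀ hc0]; nlinarith
  · rw [div_lt_iff₀ hc0]; nlinarith

theorem exists_infinite_almostBisects {ε : ℝ} (hε : 0 < ε) {X : Set ℕ} (hX : X.Infinite) :
    ∃ S : Set ℕ, S.Infinite ∧ AlmostBisects ε S X := by
  classical
  set S := {x | x ∈ X ∧ Even (Nat.count (· ∈ X) x)}
  have hS (n : ℕ) : (S ∩ X ∩ Set.Iio n).ncard = (Nat.count (· ∈ X) n + 1) / 2 := by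
    rw [Set.inter_eq_left.2 fun x (hx : x ∈ S) => hx.1, Set.ncard_inter_Iio_eq_count]
    exact Nat.count_mem_and_even_count X n
  refine ⟨S, fun hfin => ?_, ?_⟩
  · have hle := Nat.count_le_card hfin (Nat.nth (· ∈ X) (2 * hfin.toFinset.card) + 1)
    have hlt := (Nat.lt_nth_iff_count_lt (p := (· ∈ X)) hX).2
      (Nat.lt_add_one (Nat.nth (· ∈ X) (2 * hfin.toFinset.card)))
    rw [Nat.count_mem_and_even_count] at hle
    omega
  · obtain ⟨M, hM⟩ := exists_nat_gt (1 / (2 * ε))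
    refine (Set.finite_Iic (Nat.nth (· ∈ X) M)).subset fun n hn => ?_
    by_contra hlt
    refine hn ?_
    rw [hS, Set.ncard_inter_Iio_eq_count]
    apply half_succ_div_mem_Ioo
    have hMn : M < Nat.count (· ∈ X) n :=
      (Nat.lt_nth_iff_count_lt (p := (· ∈ X)) hX).2 (not_le.1 hlt)
    rw [div_lt_iff₀ (by positivity)] at hM
    have : (M : ℝ) + 1 ≤ Nat.count (· ∈ X) n := by exact_mod_cast hMn
    nlinarith

lemma countable_setOf_finite_ne (v : ℕ → ℕ) :
    {f : ℕ → ℕ | {m | f m ≠ v m}.Finite}.Countable := by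
  let extend (n : ℕ) (u : Fin n → ℕ) (m : ℕ) : ℕ := if h : m < n then u ⟨m, h⟩ else v m
  refine (Set.countable_iUnion fun n => Set.countable_range (extend n)).mono fun f hf => ?_
  obtain ⟨n, hn⟩ := hf.bddAbove
  refine Set.mem_iUnion.2 ⟨n + 1, fun i => f i, funext fun m => ?_⟩
  by_cases h : m < n + 1
  · simp [extend, h]
  · simp only [extend, h, dite_false]
    by_contra hne
    exact h (Nat.lt_succ_of_le (hn (Ne.symm hne)))

lemma exists_forall_infinite_setOf_eq {ι : Type*} [Countable ι] {A : ℕ → Type*}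
    [∀ m, Nonempty (A m)] (v : ι → ∀ m, A m) :
    ∃ g : ∀ m, A m, ∀ i, {m | g m = v i m}.Infinite := by
  rcases isEmpty_or_nonempty ι with hι | hι
  · exact ⟨fun _ => Classical.arbitrary _, fun i => isEmptyElim i⟩
  obtain ⟨e, he⟩ := exists_surjective_nat ι
  refine ⟨fun m => v (e m.unpair.1) m, fun i => ?_⟩
  obtain ⟨k, rfl⟩ := he i
  refine Set.infinite_of_injective_forall_mem (f := Nat.pair k) (fun a b h => ?_) fun n => ?_
  · exact (Nat.pair_eq_pair.1 h).2
  · simp [Nat.unpair_pair]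

theorem eFr_le_of_finite_setOf_eq {ι : Type} {A : ℕ → Type*} [∀ m, Finite (A m)]
    [∀ m, Nonempty (A m)] (v : ι → ∀ m, A m)
    (hv : ∀ g : ∀ m, A m, ∃ i, {m | g m = v i m}.Finite) : eFr ≤ #ι := by
  have hι : ℵ₀ ≤ #ι := by
    by_contra! h
    have : Countable ι := Cardinal.mk_le_aleph0_iff.1 h.le
    obtain ⟨g, hg⟩ := exists_forall_infinite_setOf_eq v
    obtain ⟨i, hi⟩ := hv g
    exact hg i hi
  let N (m : ℕ) : ℕ := Nat.card (A m)
  let enc (m : ℕ) : A m ≃ Fin (N m) := Finite.equivFin (A m)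
  let w (i : ι) (m : ℕ) : ℕ := enc m (v i m)
  let T (i : ι) : Set (ℕ → ℕ) := {f | (∀ m, f m ≤ N m) ∧ {m | f m ≠ w i m}.Finite}
  have hcard : #(⋃ i, T i) ≤ #ι := calc
    #(⋃ i, T i) ≤ #ι * ⨆ i, #(T i) := Cardinal.mk_iUnion_le T
    _ ≤ #ι * ℵ₀ := by
      gcongr
      exact ciSup_le' fun i => Cardinal.mk_le_aleph0_iff.2
        ((countable_setOf_finite_ne (w i)).mono fun f hf => hf.2).to_subtype
    _ = #ι := Cardinal.mul_eq_left hι hι Cardinal.aleph0_ne_zero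
  refine le_trans (csInf_le' ?_) hcard
  refine ⟨⋃ i, T i, ⟨N, fun f hf m => ?_⟩, fun g => ?_, rfl⟩
  · obtain ⟨i, hi⟩ := Set.mem_iUnion.1 hf
    exact hi.1 m
  let G (m : ℕ) : A m :=
    if h : g m < N m then (enc m).symm ⟨g m, h⟩ else Classical.arbitrary _
  obtain ⟨i, hi⟩ := hv G
  have hagree : {m | g m = w i m} ⊆ {m | G m = v i m} := fun m (hm : g m = w i m) => by
    simp [G, hm, w]
  refine ⟨fun m => if g m = w i m then w i m + 1 else w i m,
    Set.mem_iUnion.2 ⟨i, fun m => ?_, (hi.subset hagree).subset fun m hm => ?_⟩, fun m => ?_⟩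
  · have : w i m < N m := (enc m (v i m)).2
    dsimp only
    split_ifs <;> omega
  · by_contra h
    exact hm (if_neg h)
  · dsimp only
    split_ifs with h <;> omega

lemma div_notMem_Ioo_of_mul_le {ε : ℝ} {p q k : ℕ} (hq : 0 < q)
    (hpq : (1 / 2 + ε) * p ≤ (1 / 2 - ε) * q) (hk : q ≤ k ∨ k ≤ p) :
    (k : ℝ) / (p + q : ℕ) ∉ Set.Ioo (1 / 2 - ε) (1 / 2 + ε) := by
  have hden : (0 : ℝ) < (p + q : ℕ) := by positivity
  rintro ⟨hlo, hhi⟩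
  rw [lt_div_iff₀ hden] at hlo
  rw [div_lt_iff₀ hden] at hhi
  push_cast at hlo hhi
  rcases hk with hk | hk
  · have : (q : ℝ) ≤ k := by exact_mod_cast hk
    linarith
  · have : (k : ℝ) ≤ p := by exact_mod_cast hk
    linarith

section Blocks

variable {a : ℕ → ℕ} {P : ℕ → Finset ℕ}

lemma iUnion_inter_Iio_eq_biUnion (ha : Monotone a)
    (hP : ∀ j, (P j : Set ℕ) ⊆ Set.Ico (a j) (a (j + 1))) (m : ℕ) :
    (⋃ j, (P j : Set ℕ)) ∩ Set.Iio (a m) = ↑((Finset.range m).biUnion P) := by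
  ext x
  simp only [Set.mem_inter_iff, Set.mem_iUnion, Finset.coe_biUnion, Finset.mem_coe,
    Finset.mem_range, Set.mem_Iio]
  constructor
  · rintro ⟨⟨j, hj⟩, hx⟩
    refine ⟨j, lt_of_not_ge fun hmj => ?_, hj⟩
    exact absurd ((ha hmj).trans (hP j hj).1) (not_le.2 hx)
  · rintro ⟨j, hjm, hj⟩
    exact ⟨⟨j, hj⟩, (hP j hj).2.trans_le (ha hjm)⟩

lemma card_biUnion_range_eq_sum (ha : Monotone a)
    (hP : ∀ j, (P j : Set ℕ) ⊆ Set.Ico (a j) (a (j + 1))) (m : ℕ) :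
    ((Finset.range m).biUnion P).card = ∑ j ∈ Finset.range m, (P j).card := by
  have hdisj : ∀ i j, i < j → Disjoint (P i) (P j) := fun i j hij =>
    Finset.disjoint_left.2 fun x hxi hxj =>
      absurd ((ha hij).trans (hP j hxj).1) (not_le.2 (hP i hxi).2)
  exact Finset.card_biUnion fun i _ j _ hij =>
    hij.lt_or_gt.elim (hdisj i j) fun h => (hdisj j i h).symm

lemma ratio_notMem_Ioo_of_subset_or_disjoint {ε : ℝ} (ha : Monotone a)
    (hP : ∀ j, (P j : Set ℕ) ⊆ Set.Ico (a j) (a (j + 1))) {S : Set ℕ} {m : ℕ}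
    (hm : 0 < (P m).card)
    (hgrow : (1 / 2 + ε) * (∑ j ∈ Finset.range m, (P j).card : ℕ) ≤
      (1 / 2 - ε) * (P m).card)
    (hS : (P m : Set ℕ) ⊆ S ∨ Disjoint (P m : Set ℕ) S) :
    ((S ∩ (⋃ j, (P j : Set ℕ)) ∩ Set.Iio (a (m + 1))).ncard : ℝ) /
      ((⋃ j, (P j : Set ℕ)) ∩ Set.Iio (a (m + 1))).ncard ∉
      Set.Ioo (1 / 2 - ε) (1 / 2 + ε) := by
  rw [Set.inter_assoc, iUnion_inter_Iio_eq_biUnion ha hP, Set.ncard_coe_finset,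
    card_biUnion_range_eq_sum ha hP, Finset.sum_range_succ]
  refine div_notMem_Ioo_of_mul_le hm hgrow ?_
  rw [Finset.range_add_one, Finset.biUnion_insert, Finset.coe_union]
  rcases hS with hS | hS
  · left
    rw [← Set.ncard_coe_finset]
    exact Set.ncard_le_ncard (Set.subset_inter hS Set.subset_union_left) (Set.toFinite _)
  · right
    rw [← card_biUnion_range_eq_sum ha hP, ← Set.ncard_coe_finset]
    refine Set.ncard_le_ncard (fun x ⟨hxS, hx⟩ => ?_) (Set.toFinite _)
    exact hx.resolve_left fun hxP => Set.disjoint_left.1 hS hxP hxS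

lemma finite_setOf_subset_or_disjoint_of_almostBisects {ε : ℝ} (ha : StrictMono a)
    (hP : ∀ j, (P j : Set ℕ) ⊆ Set.Ico (a j) (a (j + 1))) (hne : ∀ m, 0 < (P m).card)
    (hgrow : ∀ m, (1 / 2 + ε) * (∑ j ∈ Finset.range m, (P j).card : ℕ) ≤
      (1 / 2 - ε) * (P m).card)
    {S : Set ℕ} (hS : AlmostBisects ε S (⋃ j, (P j : Set ℕ))) :
    {m | (P m : Set ℕ) ⊆ S ∨ Disjoint (P m : Set ℕ) S}.Finite :=
  (Set.Finite.preimage (f := fun m => a (m + 1))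
      (fun _ _ _ _ h => Nat.succ_injective (ha.injective h)) hS).subset
    fun m hm => ratio_notMem_Ioo_of_subset_or_disjoint ha.monotone hP (hne m) (hgrow m) hm

lemma infinite_iUnion_of_card_pos (ha : StrictMono a)
    (hP : ∀ j, (P j : Set ℕ) ⊆ Set.Ico (a j) (a (j + 1))) (hne : ∀ m, 0 < (P m).card) :
    (⋃ j, (P j : Set ℕ)).Infinite := by
  refine Set.infinite_of_forall_exists_gt fun n => ?_
  obtain ⟨x, hx⟩ := Finset.card_pos.1 (hne (n + 1))
  exact ⟨x, Set.mem_iUnion.2 ⟨n + 1, hx⟩,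
    (Nat.lt_succ_self n).trans_le ((ha.id_le (n + 1)).trans (hP _ hx).1)⟩

end Blocks

lemma Finset.exists_mem_powersetCard_subset_or_disjoint {α : Type*} (s : Finset α) {c : ℕ}
    (hs : 2 * c ≤ s.card) (S : Set α) :
    ∃ t ∈ s.powersetCard c, (t : Set α) ⊆ S ∨ Disjoint (t : Set α) S := by
  classical
  have hsplit := Finset.card_filter_add_card_filter_not (s := s) (· ∈ S)
  by_cases hin : c ≤ (s.filter (· ∈ S)).card
  · obtain ⟨t, hts, htc⟩ := Finset.exists_subset_card_eq hin
    refine ⟨t, Finset.mem_powersetCard.2 ⟨hts.trans (Finset.filter_subset _ _), htc⟩,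
      Or.inl fun x hx => (Finset.mem_filter.1 (hts hx)).2⟩
  · obtain ⟨t, hts, htc⟩ :=
      Finset.exists_subset_card_eq (s := s.filter (· ∉ S)) (n := c) (by omega)
    refine ⟨t, Finset.mem_powersetCard.2 ⟨hts.trans (Finset.filter_subset _ _), htc⟩,
      Or.inr (Set.disjoint_left.2 fun x hx => (Finset.mem_filter.1 (hts hx)).2)⟩

def blockStart (K m : ℕ) : ℕ := 2 * ∑ j ∈ Finset.range m, (K + 1) ^ j

def block (K m : ℕ) : Finset ℕ := Finset.Ico (blockStart K m) (blockStart K (m + 1))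

lemma blockStart_strictMono (K : ℕ) : StrictMono (blockStart K) :=
  strictMono_nat_of_lt_succ fun m => by
    simp only [blockStart, Finset.sum_range_succ]
    have : 0 < (K + 1) ^ m := by positivity
    omega

lemma card_block (K m : ℕ) : (block K m).card = 2 * (K + 1) ^ m := by
  simp only [block, Nat.card_Ico, blockStart, Finset.sum_range_succ]
  omega

lemma half_add_mul_geom_sum_le {ε : ℝ} {K : ℕ} (hK : 1 / 2 + ε ≤ K * (1 / 2 - ε)) (m : ℕ) :
    (1 / 2 + ε) * (∑ j ∈ Finset.range m, (K + 1) ^ j : ℕ) ≤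
      (1 / 2 - ε) * ((K + 1) ^ m : ℕ) := by
  have hgeom := geom_sum_mul_add (K : ℝ) m
  have hε : 0 ≤ 1 / 2 - ε := by
    by_contra h
    nlinarith [(Nat.cast_nonneg K : (0 : ℝ) ≤ K)]
  have hsum : (0 : ℝ) ≤ ∑ j ∈ Finset.range m, ((K : ℝ) + 1) ^ j := by positivity
  push_cast
  nlinarith [mul_le_mul_of_nonneg_right hK hsum]

theorem eFr_le_card_of_forall_almostBisects {ε : ℝ} (hε : ε < 1 / 2) (𝒮 : Set (Set ℕ))
    (h𝒮 : ∀ X : Set ℕ, X.Infinite → ∃ S ∈ 𝒮, AlmostBisects ε S X) : eFr ≤ #𝒮 := by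
  obtain ⟨K, hK⟩ := exists_nat_ge ((1 / 2 + ε) / (1 / 2 - ε))
  rw [div_le_iff₀ (by linarith)] at hK
  let patterns (m : ℕ) : Finset (Finset ℕ) := (block K m).powersetCard ((K + 1) ^ m)
  choose v hv using fun (S : 𝒮) m =>
    (block K m).exists_mem_powersetCard_subset_or_disjoint (card_block K m).ge S
  have (m : ℕ) : Nonempty (patterns m) :=
    (Finset.powersetCard_nonempty.2 (by rw [card_block]; omega)).to_subtype
  refine eFr_le_of_finite_setOf_eq (A := fun m => patterns m)
    (fun S m => ⟨v S m, (hv S m).1⟩) fun g => ?_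
  have hP (m : ℕ) :
      ((g m : Finset ℕ) : Set ℕ) ⊆ Set.Ico (blockStart K m) (blockStart K (m + 1)) := by
    rw [← Finset.coe_Ico]
    exact Finset.coe_subset.2 (Finset.mem_powersetCard.1 (g m).2).1
  have hcard (m : ℕ) : (g m : Finset ℕ).card = (K + 1) ^ m :=
    (Finset.mem_powersetCard.1 (g m).2).2
  have hpos (m : ℕ) : 0 < (g m : Finset ℕ).card := hcard m ▸ by positivity
  have hstart := blockStart_strictMono K
  obtain ⟨S, hS, hbis⟩ := h𝒮 _ (infinite_iUnion_of_card_pos hstart hP hpos)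
  have hgrow (m : ℕ) := half_add_mul_geom_sum_le hK m
  simp only [← hcard] at hgrow
  refine ⟨⟨S, hS⟩, (finite_setOf_subset_or_disjoint_of_almostBisects hstart hP hpos hgrow
    hbis).subset fun m (hm : g m = _) => ?_⟩
  simp only [Set.mem_ofPred_eq, hm]
  exact (hv _ m).2

/-- for every `ε ∈ (0, 1/2)`, `𝔢^{fr}_ubd ≤ 𝔰_{1/2±ε}`; hence
`𝔢^{fr}_ubd` is at most the infimum of these cardinals. -/
theorem eFr_le_sEps :
    (∀ ε : ℝ, 0 < ε → ε < 1 / 2 → eFr ≤ sEps ε) ∧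
    eFr ≤ ⨅ ε : Set.Ioo (0 : ℝ) (1 / 2), sEps ε := by
  have key (ε : ℝ) (hε0 : 0 < ε) (hε : ε < 1 / 2) : eFr ≤ sEps ε := by
    refine le_csInf ⟨_, {S | S.Infinite}, fun S hS => hS,
      fun X hX => exists_infinite_almostBisects hε0 hX, rfl⟩ ?_
    rintro c ⟨𝒮, -, h𝒮, rfl⟩
    exact eFr_le_card_of_forall_almostBisects hε 𝒮 h𝒮
  have : Nonempty (Set.Ioo (0 : ℝ) (1 / 2)) := ⟨⟨1 / 4, by norm_num⟩⟩
  exact ⟨key, le_ciInf fun ε => key ε ε.2.1 ε.2.2⟩
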